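/- For any odd positive integers w1, w2, w3, any complex number y1, and any nonnegative integer n: Σ_{k+l+m=n} (n choose k,l,m) E_{k,χ}(w1 y1) T_l(w2 d − 1, χ) T_m(w3 d − 1, χ) w1^{l+m} w2^{k+m} w3^{k+l} = Σ_{k+l+m=n} (n choose k,l,m) E_{k,χ}(w2 y1) T_l(w3 d − 1, χ) T_m(w1 d − 1, χ) w2^{l+m} w3^{k+m} w1^{k+l} = Σ_{k+l+m=n} (n choose k,l,m) E_{k,χ}(w3 y1) T_l(w1 d − 1, χ) T_m(w2 d − 1, χ) w3^{l+m} w1^{k+m} w2^{k+l}. -/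

import Mathlib

open Finset

/-- The formal exponential power series `e^{ct} = Σ cⁿ tⁿ/n!` in `ℂ[[t]]`. -/
noncomputable def expPS (c : ℂ) : PowerSeries ℂ :=
  PowerSeries.mk fun n => c ^ n / n.factorial

/-- `Σ_{a=0}^{d-1} (-1)^a χ(a) e^{at}` as a formal power series. -/
noncomputable def altSum (χ : ℤ → ℂ) (d : ℕ) : PowerSeries ℂ :=
  ∑ a ∈ Finset.range d, ((-1 : ℂ) ^ a * χ (a : ℤ)) • expPS (a : ℂ)

/-- `E` is the family of generalized Euler polynomials attached to `χ` mod `d`: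
`(Σ_{n≥0} E_{n,χ}(x) tⁿ/n!) · (e^{dt}+1) = 2 e^{xt} · Σ_{a=0}^{d-1} (-1)^a χ(a) e^{at}`. -/
def IsGenEuler (d : ℕ) (χ : ℤ → ℂ) (E : ℕ → ℂ → ℂ) : Prop :=
  ∀ x : ℂ, (PowerSeries.mk fun n => E n x / n.factorial) * (expPS (d : ℂ) + 1)
    = (2 : PowerSeries ℂ) * expPS x * altSum χ d

/-- The alternating generalized power sum `T_k(n,χ) = Σ_{a=0}^{n} (-1)^a χ(a) a^k`
(with the convention `0^0 = 1`). -/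
noncomputable def altPowSum (χ : ℤ → ℂ) (k n : ℕ) : ℂ :=
  ∑ a ∈ Finset.range (n + 1), (-1 : ℂ) ^ a * χ (a : ℤ) * (a : ℂ) ^ k

/-- The multinomial coefficient `(k+l+m)! / (k! l! m!)`. -/
def multinom (k l m : ℕ) : ℕ :=
  (k + l + m).factorial / (k.factorial * l.factorial * m.factorial)

/-! Write `e_c = e^{ct}` and `A = Σ_{a<d} (-1)^a χ(a) e_a`. The defining identity says that the
EGF `F_x` of `E_{·,χ}(x)` satisfies `F_x (e_d + 1) = 2 e_x A`. Splitting `a = r + j d`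
(`χ` is `d`-periodic and `d` is odd) and summing the alternating geometric series for odd `w`
shows that the EGF `T_w` of `T_·(wd - 1, χ)` satisfies `T_w (e_d + 1) = A (e_{wd} + 1)`. Hence
`F_{uy}(vwt) T_v(uwt) T_w(uvt) · (e_{dvw} + 1)(e_{duw} + 1)(e_{duv} + 1)` equals
`2 e_{uvwy} A(vwt) A(uwt) A(uvt) (e_{uvwd} + 1)²`, which is symmetric in `u, v, w`; cancelling
the nonzero factor in the domain `ℂ⟦t⟧` makes the product invariant under rotating `(u, v, w)`,
and `n!` times its `n`-th coefficient is the triple sum. -/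

open PowerSeries

lemma expPS_eq_rescale_exp (c : ℂ) : expPS c = rescale c (exp ℂ) := by
  ext n
  simp [expPS, coeff_rescale, coeff_exp, div_eq_mul_inv]

lemma expPS_mul_expPS (a b : ℂ) : expPS a * expPS b = expPS (a + b) := by
  simp only [expPS_eq_rescale_exp, exp_mul_exp_eq_exp_add]

lemma expPS_pow (c : ℂ) (j : ℕ) : expPS c ^ j = expPS (j * c) := by
  rw [expPS_eq_rescale_exp, expPS_eq_rescale_exp, ← map_pow, exp_pow_eq_rescale_exp,
    rescale_rescale]

lemma rescale_expPS (c a : ℂ) : rescale c (expPS a) = expPS (a * c) := by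
  rw [expPS_eq_rescale_exp, expPS_eq_rescale_exp, rescale_rescale]

lemma expPS_add_one_ne_zero (c : ℂ) : expPS c + 1 ≠ 0 := by
  intro h
  have h0 := congrArg constantCoeff h
  simp [expPS, ← coeff_zero_eq_constantCoeff] at h0

lemma geom_sum_neg_mul_add_one_of_odd {R : Type*} [CommRing R] (x : R) {w : ℕ} (hw : Odd w) :
    (∑ j ∈ range w, (-x) ^ j) * (x + 1) = x ^ w + 1 := by
  linear_combination (-1 : R) * geom_sum_mul (-x) w - hw.neg_pow x

noncomputable def egf (f : ℕ → ℂ) : ℂ⟦X⟧ :=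
  mk fun n => f n / n.factorial

lemma egf_altPowSum (χ : ℤ → ℂ) (N : ℕ) :
    egf (altPowSum χ · N) = ∑ a ∈ range (N + 1), ((-1 : ℂ) ^ a * χ a) • expPS a := by
  ext l
  simp [egf, altPowSum, expPS, Finset.sum_div, mul_div_assoc]

lemma sum_range_mul_eq_altSum_mul_geom_sum {χ : ℤ → ℂ} {d : ℕ} (hd : Odd d)
    (hper : Function.Periodic χ d) (w : ℕ) :
    ∑ a ∈ range (w * d), ((-1 : ℂ) ^ a * χ a) • expPS a
      = altSum χ d * ∑ j ∈ range w, (-expPS d) ^ j := by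
  induction w with
  | zero => simp
  | succ w ih =>
    rw [add_one_mul, sum_range_add, ih, sum_range_succ, mul_add, altSum]
    refine congrArg _ ?_
    rw [sum_mul]
    refine sum_congr rfl fun r _ => ?_
    have hsign : (-1 : ℂ) ^ (w * d + r) = (-1) ^ w * (-1) ^ r := by
      rw [pow_add, mul_comm w d, pow_mul, hd.neg_one_pow]
    have hχ : χ ((w * d + r : ℕ) : ℤ) = χ r := by
      simpa [add_comm] using (hper.nat_mul w) r
    have hexp : expPS ((w * d + r : ℕ) : ℂ) = expPS d ^ w * expPS r := by
      rw [expPS_pow, expPS_mul_expPS]; push_cast; ring_nf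
    rw [hsign, hχ, hexp]
    simp only [smul_eq_C_mul, map_mul, map_pow, map_neg, map_one]
    ring

lemma egf_altPowSum_mul_expPS_add_one {χ : ℤ → ℂ} {d : ℕ} (hd : Odd d)
    (hper : Function.Periodic χ d) {w : ℕ} (hw : Odd w) :
    egf (altPowSum χ · (w * d - 1)) * (expPS d + 1) = altSum χ d * (expPS (w * d) + 1) := by
  have hwd : w * d - 1 + 1 = w * d := Nat.sub_add_cancel (Nat.mul_pos hw.pos hd.pos)
  rw [egf_altPowSum, hwd, sum_range_mul_eq_altSum_mul_geom_sum hd hper, mul_assoc,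
    geom_sum_neg_mul_add_one_of_odd _ hw, expPS_pow]

noncomputable def tripleEGF (χ : ℤ → ℂ) (E : ℕ → ℂ → ℂ) (d : ℕ) (y : ℂ) (u v w : ℕ) : ℂ⟦X⟧ :=
  rescale ((v : ℂ) * w) (egf (E · (u * y))) *
    rescale ((u : ℂ) * w) (egf (altPowSum χ · (v * d - 1))) *
    rescale ((u : ℂ) * v) (egf (altPowSum χ · (w * d - 1)))

lemma tripleEGF_mul_expPS_add_one {χ : ℤ → ℂ} {d : ℕ} (hd : Odd d)
    (hper : Function.Periodic χ d) {E : ℕ → ℂ → ℂ} (hE : IsGenEuler d χ E) (y : ℂ)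
    (u : ℕ) {v w : ℕ} (hv : Odd v) (hw : Odd w) :
    tripleEGF χ E d y u v w *
        ((expPS (d * (v * w)) + 1) * (expPS (d * (u * w)) + 1) * (expPS (d * (u * v)) + 1))
      = 2 * expPS (u * v * w * y) *
        (rescale ((v : ℂ) * w) (altSum χ d) * rescale ((u : ℂ) * w) (altSum χ d) *
          rescale ((u : ℂ) * v) (altSum χ d)) * (expPS (u * v * w * d) + 1) ^ 2 := by
  have hE' : rescale ((v : ℂ) * w) (egf (E · (u * y))) * (expPS (d * (v * w)) + 1)
      = 2 * expPS (u * y * (v * w)) * rescale ((v : ℂ) * w) (altSum χ d) := by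
    simpa [egf, rescale_expPS, map_ofNat] using congrArg (rescale ((v : ℂ) * w)) (hE (u * y))
  have hT {v' : ℕ} (hv' : Odd v') (c : ℂ) :
      rescale c (egf (altPowSum χ · (v' * d - 1))) * (expPS (d * c) + 1)
        = rescale c (altSum χ d) * (expPS (v' * d * c) + 1) := by
    simpa [rescale_expPS] using
      congrArg (rescale c) (egf_altPowSum_mul_expPS_add_one hd hper hv')
  calc _ = (rescale ((v : ℂ) * w) (egf (E · (u * y))) * (expPS (d * (v * w)) + 1)) *
        (rescale ((u : ℂ) * w) (egf (altPowSum χ · (v * d - 1))) * (expPS (d * (u * w)) + 1)) *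
        (rescale ((u : ℂ) * v) (egf (altPowSum χ · (w * d - 1))) * (expPS (d * (u * v)) + 1)) := by
        rw [tripleEGF]; ring
    _ = _ := by
        rw [hE', hT hv, hT hw]
        ring_nf

lemma tripleEGF_rotate {χ : ℤ → ℂ} {d : ℕ} (hd : Odd d) (hper : Function.Periodic χ d)
    {E : ℕ → ℂ → ℂ} (hE : IsGenEuler d χ E) (y : ℂ) {u v w : ℕ} (hu : Odd u) (hv : Odd v)
    (hw : Odd w) : tripleEGF χ E d y u v w = tripleEGF χ E d y v w u := by
  have hD : (expPS (d * (v * w)) + 1) * (expPS (d * (u * w)) + 1) * (expPS (d * (u * v)) + 1)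
      ≠ 0 := by
    simp [expPS_add_one_ne_zero]
  refine mul_right_cancel₀ hD ?_
  linear_combination (norm := ring_nf) tripleEGF_mul_expPS_add_one hd hper hE y u hv hw -
    tripleEGF_mul_expPS_add_one hd hper hE y v hw hu

lemma coeff_mul_mul {R : Type*} [CommSemiring R] (A B C : R⟦X⟧) (n : ℕ) :
    coeff n (A * B * C) = ∑ k ∈ range (n + 1), ∑ l ∈ range (n + 1 - k),
      coeff k A * coeff l B * coeff (n - k - l) C := by
  rw [mul_assoc, coeff_mul, Nat.sum_antidiagonal_eq_sum_range_succ_mk]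
  refine sum_congr rfl fun k hk => ?_
  rw [coeff_mul, Nat.sum_antidiagonal_eq_sum_range_succ_mk, mul_sum,
    show (n - k).succ = n + 1 - k by have := mem_range.1 hk; omega]
  simp only [mul_assoc, Nat.sub_sub]

lemma multinom_eq_div (k l m : ℕ) :
    (multinom k l m : ℂ) = (k + l + m).factorial / (k.factorial * l.factorial * m.factorial) := by
  have hdvd : k.factorial * l.factorial * m.factorial ∣ (k + l + m).factorial :=
    (mul_dvd_mul_right (Nat.factorial_mul_factorial_dvd_factorial_add k l) _).trans
      (Nat.factorial_mul_factorial_dvd_factorial_add _ m)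
  rw [multinom, Nat.cast_div hdvd (Nat.cast_ne_zero.2 (by positivity))]
  push_cast
  ring

lemma sum_multinom_eq_factorial_mul_coeff (f g h : ℕ → ℂ) (a b c : ℂ) (n : ℕ) :
    ∑ k ∈ range (n + 1), ∑ l ∈ range (n + 1 - k),
      (multinom k l (n - k - l) : ℂ) * f k * g l * h (n - k - l) * a ^ k * b ^ l * c ^ (n - k - l)
      = n.factorial * coeff n (rescale a (egf f) * rescale b (egf g) * rescale c (egf h)) := by
  rw [coeff_mul_mul, mul_sum]
  refine sum_congr rfl fun k hk => ?_
  rw [mul_sum]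
  refine sum_congr rfl fun l hl => ?_
  have hn : k + l + (n - k - l) = n := by have := mem_range.1 hk; have := mem_range.1 hl; omega
  simp only [coeff_rescale, egf, coeff_mk, multinom_eq_div, hn]
  field_simp

lemma sum_eq_factorial_mul_coeff_tripleEGF (χ : ℤ → ℂ) (E : ℕ → ℂ → ℂ) (d : ℕ) (y : ℂ)
    (u v w n : ℕ) :
    ∑ k ∈ range (n + 1), ∑ l ∈ range (n + 1 - k),
      (multinom k l (n - k - l) : ℂ) * E k ((u : ℂ) * y) *
        altPowSum χ l (v * d - 1) * altPowSum χ (n - k - l) (w * d - 1) *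
        (u : ℂ) ^ (l + (n - k - l)) * (v : ℂ) ^ (k + (n - k - l)) * (w : ℂ) ^ (k + l)
      = n.factorial * coeff n (tripleEGF χ E d y u v w) := by
  rw [tripleEGF, ← sum_multinom_eq_factorial_mul_coeff]
  refine sum_congr rfl fun k _ => sum_congr rfl fun l _ => ?_
  ring

theorem stmt_3_general (d : ℕ) (hd : Odd d) (χ : ℤ → ℂ)
    (hper : ∀ a : ℤ, χ (a + d) = χ a)
    (E : ℕ → ℂ → ℂ) (hE : IsGenEuler d χ E)
    (w1 w2 w3 : ℕ)
    (hw1o : Odd w1) (hw2o : Odd w2) (hw3o : Odd w3)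
    (y1 : ℂ) (n : ℕ) :
    (∑ k ∈ range (n + 1), ∑ l ∈ range (n + 1 - k),
      (multinom k l (n - k - l) : ℂ) * E k ((w1 : ℂ) * y1) *
        altPowSum χ l (w2 * d - 1) * altPowSum χ (n - k - l) (w3 * d - 1) *
        (w1 : ℂ) ^ (l + (n - k - l)) * (w2 : ℂ) ^ (k + (n - k - l)) * (w3 : ℂ) ^ (k + l))
    = (∑ k ∈ range (n + 1), ∑ l ∈ range (n + 1 - k),
      (multinom k l (n - k - l) : ℂ) * E k ((w2 : ℂ) * y1) *
        altPowSum χ l (w3 * d - 1) * altPowSum χ (n - k - l) (w1 * d - 1) *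
        (w2 : ℂ) ^ (l + (n - k - l)) * (w3 : ℂ) ^ (k + (n - k - l)) * (w1 : ℂ) ^ (k + l))
    ∧ (∑ k ∈ range (n + 1), ∑ l ∈ range (n + 1 - k),
      (multinom k l (n - k - l) : ℂ) * E k ((w2 : ℂ) * y1) *
        altPowSum χ l (w3 * d - 1) * altPowSum χ (n - k - l) (w1 * d - 1) *
        (w2 : ℂ) ^ (l + (n - k - l)) * (w3 : ℂ) ^ (k + (n - k - l)) * (w1 : ℂ) ^ (k + l))
    = ∑ k ∈ range (n + 1), ∑ l ∈ range (n + 1 - k),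
      (multinom k l (n - k - l) : ℂ) * E k ((w3 : ℂ) * y1) *
        altPowSum χ l (w1 * d - 1) * altPowSum χ (n - k - l) (w2 * d - 1) *
        (w3 : ℂ) ^ (l + (n - k - l)) * (w1 : ℂ) ^ (k + (n - k - l)) * (w2 : ℂ) ^ (k + l) := by
  simp only [sum_eq_factorial_mul_coeff_tripleEGF]
  exact ⟨by rw [tripleEGF_rotate hd hper hE y1 hw1o hw2o hw3o],
    by rw [tripleEGF_rotate hd hper hE y1 hw2o hw3o hw1o]⟩

/-- Theorem 4: three cyclic symmetries for the triple sum with one generalized Euler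
polynomial factor and two alternating generalized power sum factors. -/
theorem stmt_3 (d : ℕ) (hd : Odd d) (hd0 : 0 < d) (χ : ℤ → ℂ)
    (hper : ∀ a : ℤ, χ (a + d) = χ a)
    (hmul : ∀ a b : ℤ, χ (a * b) = χ a * χ b) (hone : χ 1 = 1)
    (hvan : ∀ a : ℤ, 1 < Int.gcd a d → χ a = 0)
    (E : ℕ → ℂ → ℂ) (hE : IsGenEuler d χ E)
    (w1 w2 w3 : ℕ) (hw1 : 0 < w1) (hw2 : 0 < w2) (hw3 : 0 < w3)
    (hw1o : Odd w1) (hw2o : Odd w2) (hw3o : Odd w3)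
    (y1 : ℂ) (n : ℕ) :
    (∑ k ∈ range (n + 1), ∑ l ∈ range (n + 1 - k),
      (multinom k l (n - k - l) : ℂ) * E k ((w1 : ℂ) * y1) *
        altPowSum χ l (w2 * d - 1) * altPowSum χ (n - k - l) (w3 * d - 1) *
        (w1 : ℂ) ^ (l + (n - k - l)) * (w2 : ℂ) ^ (k + (n - k - l)) * (w3 : ℂ) ^ (k + l))
    = (∑ k ∈ range (n + 1), ∑ l ∈ range (n + 1 - k),
      (multinom k l (n - k - l) : ℂ) * E k ((w2 : ℂ) * y1) *
        altPowSum χ l (w3 * d - 1) * altPowSum χ (n - k - l) (w1 * d - 1) *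
        (w2 : ℂ) ^ (l + (n - k - l)) * (w3 : ℂ) ^ (k + (n - k - l)) * (w1 : ℂ) ^ (k + l))
    ∧ (∑ k ∈ range (n + 1), ∑ l ∈ range (n + 1 - k),
      (multinom k l (n - k - l) : ℂ) * E k ((w2 : ℂ) * y1) *
        altPowSum χ l (w3 * d - 1) * altPowSum χ (n - k - l) (w1 * d - 1) *
        (w2 : ℂ) ^ (l + (n - k - l)) * (w3 : ℂ) ^ (k + (n - k - l)) * (w1 : ℂ) ^ (k + l))
    = ∑ k ∈ range (n + 1), ∑ l ∈ range (n + 1 - k),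
      (multinom k l (n - k - l) : ℂ) * E k ((w3 : ℂ) * y1) *
        altPowSum χ l (w1 * d - 1) * altPowSum χ (n - k - l) (w2 * d - 1) *
        (w3 : ℂ) ^ (l + (n - k - l)) * (w1 : ℂ) ^ (k + (n - k - l)) * (w2 : ℂ) ^ (k + l) :=
  stmt_3_general d hd χ hper E hE w1 w2 w3 hw1o hw2o hw3o y1 n
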